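/- Fix μ ∈ ℝ, σ > 0, λ > 0, h > 0. For n ≥ 1 set μ* = μ/n, σ* = σ/√n, λ* = λ/n, and define f_n(w) = ∑_{k=0}^∞ φ_{μ*+hk, σ*}(w) e^{−λ*} λ*^k / k! and g_n(w) = (1−λ*) φ_{μ*, σ*}(w) + λ* φ_{μ*+h, σ*}(w) for w ∈ ℝ. Then sup_{w ∈ ℝ} |f_n(w) − g_n(w)| = o(1/n) as n → ∞; that is, n · sup_{w ∈ ℝ} |f_n(w) − g_n(w)| → 0. -/
import Mathlib


open MeasureTheory Filter Set

/-- The density of a normal random variable with mean `a` and standard deviation `b`. -/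
noncomputable def normpdf (a b w : ℝ) : ℝ :=
  (1 / (b * Real.sqrt (2 * Real.pi))) * Real.exp (-(w - a) ^ 2 / (2 * b ^ 2))

lemma normpdf_nonneg (a b w : ℝ) (hb : 0 < b) : 0 ≤ normpdf a b w := by
  unfold normpdf
  positivity

lemma normpdf_le (a b w : ℝ) (hb : 0 < b) :
    normpdf a b w ≤ 1 / (b * Real.sqrt (2 * Real.pi)) := by
  unfold normpdf
  have h1 : Real.exp (-(w - a) ^ 2 / (2 * b ^ 2)) ≤ 1 := by
    apply Real.exp_le_one_iff.2
    have : 0 ≤ (w - a) ^ 2 := sq_nonneg _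
    have : 0 < 2 * b ^ 2 := by positivity
    apply div_nonpos_of_nonpos_of_nonneg <;> nlinarith [sq_nonneg (w-a)]
  have hB : 0 ≤ 1 / (b * Real.sqrt (2 * Real.pi)) := by positivity
  calc (1 / (b * Real.sqrt (2 * Real.pi))) * Real.exp (-(w - a) ^ 2 / (2 * b ^ 2))
      ≤ (1 / (b * Real.sqrt (2 * Real.pi))) * 1 := by
        exact mul_le_mul_of_nonneg_left h1 hB
    _ = 1 / (b * Real.sqrt (2 * Real.pi)) := mul_one _

lemma exp_tsum (x : ℝ) : Real.exp x = ∑' k : ℕ, x ^ k / (Nat.factorial k) := by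
  rw [Real.exp_eq_exp_ℝ, NormedSpace.exp_eq_tsum_div]

lemma summable_pow_fac (x : ℝ) : Summable (fun k : ℕ => x ^ k / (Nat.factorial k)) :=
  Real.summable_pow_div_factorial x

set_option maxHeartbeats 1000000 in
/-- Key pointwise estimate. -/
lemma key (a b h w x : ℝ) (hb : 0 < b) (hx : 0 ≤ x) (hx1 : x ≤ 1) :
    |(∑' k : ℕ, normpdf (a + h * k) b w *
        (Real.exp (-x) * x ^ k / (Nat.factorial k))) -
      ((1 - x) * normpdf a b w + x * normpdf (a + h) b w)| ≤
    3 * x ^ 2 / (b * Real.sqrt (2 * Real.pi)) := by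
  set B := 1 / (b * Real.sqrt (2 * Real.pi)) with hBdef
  have hB : 0 ≤ B := by positivity
  set p : ℕ → ℝ := fun k => normpdf (a + h * k) b w with hpdef
  have hp0 : ∀ k, 0 ≤ p k := fun k => normpdf_nonneg _ _ _ hb
  have hpB : ∀ k, p k ≤ B := fun k => normpdf_le _ _ _ hb
  set c : ℕ → ℝ := fun k => Real.exp (-x) * x ^ k / (Nat.factorial k) with hcdef
  have hc0 : ∀ k, 0 ≤ c k := by
    intro k
    have := Real.exp_pos (-x)
    have : (0:ℝ) ≤ x ^ k := pow_nonneg hx k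
    positivity
  have hcsum : Summable c := by
    have := (summable_pow_fac x).mul_left (Real.exp (-x))
    apply this.congr
    intro k; simp [hcdef, mul_div_assoc]
  have hsum : Summable (fun k => p k * c k) := by
    apply Summable.of_nonneg_of_le (fun k => mul_nonneg (hp0 k) (hc0 k))
      (fun k => mul_le_mul_of_nonneg_right (hpB k) (hc0 k))
    exact hcsum.mul_left B
  -- split off two terms
  have hsum1 : Summable (fun k => p (k+1) * c (k+1)) := by
    exact (summable_nat_add_iff 1).2 hsum
  have hsum2 : Summable (fun k => p (k+2) * c (k+2)) := by
    exact (summable_nat_add_iff 2).2 hsum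
  have hsplit : (∑' k : ℕ, p k * c k) =
      p 0 * c 0 + (p 1 * c 1 + ∑' k : ℕ, p (k+2) * c (k+2)) := by
    rw [Summable.tsum_eq_zero_add hsum]
    congr 1
    rw [Summable.tsum_eq_zero_add hsum1]
  -- bound the tail
  have htail_le : (∑' k : ℕ, p (k+2) * c (k+2)) ≤ B * x ^ 2 := by
    have h1 : ∀ k : ℕ, p (k+2) * c (k+2) ≤ B * (Real.exp (-x) * (x ^ 2 * (x ^ k / (Nat.factorial k)))) := by
      intro k
      have hpk := hpB (k+2)
      have hck := hc0 (k+2)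
      have hfac : (Nat.factorial k : ℝ) ≤ (Nat.factorial (k+2) : ℝ) := by
        exact_mod_cast Nat.factorial_le (by omega)
      have hfacpos : (0:ℝ) < (Nat.factorial k : ℝ) := by
        exact_mod_cast Nat.factorial_pos k
      have hc_le : c (k+2) ≤ Real.exp (-x) * (x ^ 2 * (x ^ k / (Nat.factorial k))) := by
        simp only [hcdef]
        rw [mul_div_assoc]
        apply mul_le_mul_of_nonneg_left _ (Real.exp_pos (-x)).le
        rw [div_le_iff₀ (by exact_mod_cast Nat.factorial_pos (k+2))]
        have : x ^ (k+2) = x ^ 2 * x ^ k := by ring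
        rw [this]
        have h2 : x ^ 2 * (x ^ k / (Nat.factorial k)) * (Nat.factorial (k+2) : ℝ)
            = x ^ 2 * x ^ k * ((Nat.factorial (k+2) : ℝ) / (Nat.factorial k)) := by
          field_simp
        rw [h2]
        have h3 : (1:ℝ) ≤ (Nat.factorial (k+2) : ℝ) / (Nat.factorial k) := by
          rw [le_div_iff₀ hfacpos]; linarith
        have h4 : (0:ℝ) ≤ x ^ 2 * x ^ k := mul_nonneg (pow_nonneg hx 2) (pow_nonneg hx k)
        nlinarith [mul_le_mul_of_nonneg_left h3 h4]
      calc p (k+2) * c (k+2) ≤ B * c (k+2) :=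
            mul_le_mul_of_nonneg_right hpk hck
        _ ≤ B * (Real.exp (-x) * (x ^ 2 * (x ^ k / (Nat.factorial k)))) :=
            mul_le_mul_of_nonneg_left hc_le hB
    have hsumr : Summable (fun k : ℕ => B * (Real.exp (-x) * (x ^ 2 * (x ^ k / (Nat.factorial k))))) := by
      exact (((summable_pow_fac x).mul_left (x^2)).mul_left (Real.exp (-x))).mul_left B
    have := Summable.tsum_le_tsum h1 hsum2 hsumr
    calc (∑' k : ℕ, p (k+2) * c (k+2))
        ≤ ∑' k : ℕ, B * (Real.exp (-x) * (x ^ 2 * (x ^ k / (Nat.factorial k)))) := this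
      _ = B * (Real.exp (-x) * (x ^ 2 * Real.exp x)) := by
          rw [tsum_mul_left, tsum_mul_left, tsum_mul_left, ← exp_tsum]
      _ = B * x ^ 2 * (Real.exp (-x) * Real.exp x) := by ring
      _ = B * x ^ 2 := by rw [← Real.exp_add]; simp
  have htail_nonneg : 0 ≤ ∑' k : ℕ, p (k+2) * c (k+2) :=
    tsum_nonneg fun k => mul_nonneg (hp0 _) (hc0 _)
  -- exp bounds
  have hexp_lb : 1 - x ≤ Real.exp (-x) := by
    have := Real.add_one_le_exp (-x); linarith
  have hexp_ub : Real.exp (-x) ≤ 1 := Real.exp_le_one_iff.2 (by linarith)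
  have hexp_quad : |Real.exp (-x) - (1 - x)| ≤ x ^ 2 := by
    have habs : |(-x)| ≤ 1 := by rw [abs_neg, abs_of_nonneg hx]; exact hx1
    have := Real.exp_bound habs (by norm_num : 0 < 2)
    have hfin : (∑ i ∈ Finset.range 2, (-x) ^ i / (Nat.factorial i)) = 1 - x := by
      simp [Finset.sum_range_succ]
      ring
    rw [hfin] at this
    rw [abs_neg, abs_of_nonneg hx] at this
    norm_num [Nat.factorial] at this
    nlinarith [sq_nonneg x]
  -- now combine
  have heq : (∑' k : ℕ, p k * c k) - ((1 - x) * p 0 + x * p 1) =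
      p 0 * (Real.exp (-x) - (1 - x)) + p 1 * (Real.exp (-x) * x - x) +
        ∑' k : ℕ, p (k+2) * c (k+2) := by
    rw [hsplit]
    have hc0' : c 0 = Real.exp (-x) := by simp [hcdef]
    have hc1' : c 1 = Real.exp (-x) * x := by simp [hcdef]
    rw [hc0', hc1']; ring
  have hterm2 : |Real.exp (-x) * x - x| ≤ x ^ 2 := by
    have : Real.exp (-x) * x - x = -(x * (1 - Real.exp (-x))) := by ring
    rw [this, abs_neg]
    rw [abs_of_nonneg (mul_nonneg hx (by linarith))]
    nlinarith
  have hp0' : p 0 = normpdf a b w := by simp [hpdef]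
  have hp1' : p 1 = normpdf (a + h) b w := by simp [hpdef]
  rw [← hp0', ← hp1', heq]
  have h0B := hpB 0
  have h1B := hpB 1
  have e1 : |p 0 * (Real.exp (-x) - (1 - x))| ≤ B * x ^ 2 := by
    rw [abs_mul, abs_of_nonneg (hp0 0)]
    exact mul_le_mul h0B hexp_quad (abs_nonneg _) hB
  have e2 : |p 1 * (Real.exp (-x) * x - x)| ≤ B * x ^ 2 := by
    rw [abs_mul, abs_of_nonneg (hp0 1)]
    apply mul_le_mul h1B hterm2 (abs_nonneg _) hB
  have e3 : |∑' k : ℕ, p (k+2) * c (k+2)| ≤ B * x ^ 2 := by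
    rw [abs_of_nonneg htail_nonneg]; exact htail_le
  calc |p 0 * (Real.exp (-x) - (1 - x)) + p 1 * (Real.exp (-x) * x - x) +
        ∑' k : ℕ, p (k+2) * c (k+2)|
      ≤ |p 0 * (Real.exp (-x) - (1 - x)) + p 1 * (Real.exp (-x) * x - x)| +
        |∑' k : ℕ, p (k+2) * c (k+2)| := abs_add_le _ _
    _ ≤ |p 0 * (Real.exp (-x) - (1 - x))| + |p 1 * (Real.exp (-x) * x - x)| +
        |∑' k : ℕ, p (k+2) * c (k+2)| := by
          have := abs_add_le (p 0 * (Real.exp (-x) - (1 - x))) (p 1 * (Real.exp (-x) * x - x))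
          linarith
    _ ≤ B * x ^ 2 + B * x ^ 2 + B * x ^ 2 := by linarith
    _ = 3 * x ^ 2 / (b * Real.sqrt (2 * Real.pi)) := by rw [hBdef]; ring

/-- With `μ* = μ/n`, `σ* = σ/√n`, `λ* = λ/n`, the infinite Poisson mixture
density `f_n(w) = ∑_k φ_{μ*+hk,σ*}(w) e^{-λ*} λ*^k / k!` and the two-component mixture
`g_n(w) = (1-λ*) φ_{μ*,σ*}(w) + λ* φ_{μ*+h,σ*}(w)` satisfy
`sup_w |f_n(w) - g_n(w)| = o(1/n)`, i.e. `n · sup_w |f_n(w) - g_n(w)| → 0`. -/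
theorem stmt13 (μ σ lam h : ℝ) (hσ : 0 < σ) (hlam : 0 < lam) (hh : 0 < h) :
    Tendsto
      (fun n : ℕ => (n : ℝ) *
        ⨆ w : ℝ,
          |(∑' k : ℕ, normpdf (μ / n + h * k) (σ / Real.sqrt n) w *
              (Real.exp (-(lam / n)) * (lam / n) ^ k / (Nat.factorial k))) -
            ((1 - lam / n) * normpdf (μ / n) (σ / Real.sqrt n) w +
              (lam / n) * normpdf (μ / n + h) (σ / Real.sqrt n) w)|)
      atTop (nhds 0) := by
  set C : ℝ := 3 * lam ^ 2 / (σ * Real.sqrt (2 * Real.pi)) with hCdef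
  have hC : 0 ≤ C := by positivity
  -- the bounding sequence
  have hsqrt : Tendsto (fun n : ℕ => Real.sqrt n) atTop atTop := by
    have h1 : Tendsto (fun y : ℝ => y ^ ((1:ℝ)/2)) atTop atTop :=
      tendsto_rpow_atTop (by norm_num)
    have h2 := h1.comp tendsto_natCast_atTop_atTop (α := ℕ)
    apply h2.congr
    intro n
    simp only [Function.comp]
    rw [← Real.sqrt_eq_rpow]
  have hbnd : Tendsto (fun n : ℕ => C / Real.sqrt n) atTop (nhds 0) :=
    Tendsto.div_atTop tendsto_const_nhds hsqrt
  apply squeeze_zero' ?_ ?_ hbnd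
  · -- eventually nonneg
    filter_upwards [eventually_ge_atTop 1] with n hn
    have hn0 : (0:ℝ) < n := by exact_mod_cast hn
    apply mul_nonneg hn0.le
    apply Real.iSup_nonneg
    intro w
    exact abs_nonneg _
  · -- eventual bound
    filter_upwards [eventually_ge_atTop (max 1 ⌈lam⌉₊)] with n hn
    have hn1 : 1 ≤ n := le_trans (le_max_left _ _) hn
    have hn0 : (0:ℝ) < n := by exact_mod_cast hn1
    have hxs : 0 ≤ lam / n := by positivity
    have hx1 : lam / n ≤ 1 := by
      rw [div_le_one hn0]
      calc lam ≤ (⌈lam⌉₊ : ℝ) := Nat.le_ceil lam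
        _ ≤ (n : ℝ) := by exact_mod_cast le_trans (le_max_right _ _) hn
    have hsn : 0 < Real.sqrt n := Real.sqrt_pos.2 hn0
    have hb : 0 < σ / Real.sqrt n := by positivity
    have hkey : ∀ w : ℝ,
        |(∑' k : ℕ, normpdf (μ / n + h * k) (σ / Real.sqrt n) w *
            (Real.exp (-(lam / n)) * (lam / n) ^ k / (Nat.factorial k))) -
          ((1 - lam / n) * normpdf (μ / n) (σ / Real.sqrt n) w +
            (lam / n) * normpdf (μ / n + h) (σ / Real.sqrt n) w)| ≤
        3 * (lam / n) ^ 2 / ((σ / Real.sqrt n) * Real.sqrt (2 * Real.pi)) :=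
      fun w => key (μ / n) (σ / Real.sqrt n) h w (lam / n) hb hxs hx1
    have hsup : (⨆ w : ℝ,
        |(∑' k : ℕ, normpdf (μ / n + h * k) (σ / Real.sqrt n) w *
            (Real.exp (-(lam / n)) * (lam / n) ^ k / (Nat.factorial k))) -
          ((1 - lam / n) * normpdf (μ / n) (σ / Real.sqrt n) w +
            (lam / n) * normpdf (μ / n + h) (σ / Real.sqrt n) w)|) ≤
        3 * (lam / n) ^ 2 / ((σ / Real.sqrt n) * Real.sqrt (2 * Real.pi)) :=
      ciSup_le hkey
    have hmul := mul_le_mul_of_nonneg_left hsup hn0.le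
    refine le_trans hmul (le_of_eq ?_)
    have hpi : 0 < Real.sqrt (2 * Real.pi) := Real.sqrt_pos.2 (by positivity)
    have hss : Real.sqrt n * Real.sqrt n = n := Real.mul_self_sqrt hn0.le
    have h1 : (n:ℝ) * (3 * (lam / n) ^ 2 / (σ / Real.sqrt n * Real.sqrt (2*Real.pi))) =
        C * (Real.sqrt n / n) := by
      rw [hCdef]
      field_simp
    have h2 : Real.sqrt n / n = 1 / Real.sqrt n := by
      rw [div_eq_div_iff hn0.ne' hsn.ne']
      simp [hss]
    rw [h1, h2, mul_one_div]
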